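/- Let θ : E → E ⊗ Ω be an Ω-valued endomorphism (Higgs field) on a graded module E = ⊕_q E^{k−q,q} with θ(E^{p,q}) ⊆ E^{p−1,q+1} ⊗ Ω and satisfying θ∧θ = 0 (the compositions into E ⊗ Ω ⊗ Ω, followed by the projection Ω⊗Ω → Λ²Ω, vanish). Then for each q the iterated map θ^q : E^{n,0} → E^{n−q,q} ⊗ (⊗^q Ω) factors through E^{n−q,q} ⊗ S^q Ω, the symmetric power. -/

import Mathlib

/-!
Commutation of consecutive components of `θ` says that the iterated composite is unchanged
when two adjacent indices of the tuple are exchanged; since adjacent transpositions generate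
the symmetric group, it is invariant under every permutation.
-/

/-- Iterated composite of the components of a Higgs field: for a tuple of indices
`f : Fin q → ι` (indices of a basis of `Ω`), the composite
`θ_{f(q-1)} ∘ ⋯ ∘ θ_{f(0)} : E 0 → E q`. -/
noncomputable def iterComp {R : Type*} [CommSemiring R] {ι : Type*} {E : ℕ → Type*}
    [∀ q, AddCommMonoid (E q)] [∀ q, Module R (E q)]
    (θ : ∀ q, ι → (E q →ₗ[R] E (q + 1))) : ∀ q : ℕ, (Fin q → ι) → (E 0 →ₗ[R] E q)
  | 0, _ => LinearMap.id
  | (q + 1), f => (θ q (f (Fin.last q))).comp (iterComp θ q (f ∘ Fin.castSucc))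

open Equiv

theorem Fin.apply_comp_perm_eq_of_apply_comp_swap {α β : Type*} {n : ℕ}
    (F : (Fin (n + 1) → α) → β)
    (hswap : ∀ (i : Fin n) (f : Fin (n + 1) → α), F (f ∘ swap i.castSucc i.succ) = F f)
    (σ : Perm (Fin (n + 1))) (f : Fin (n + 1) → α) : F (f ∘ σ) = F f := by
  have hσ : σ ∈ Submonoid.closure (Set.range fun i : Fin n ↦ swap i.castSucc i.succ) := by
    rw [Perm.mclosure_swap_castSucc_succ]; trivial
  induction hσ using Submonoid.closure_induction generalizing f with
  | mem _ hτ => obtain ⟨i, rfl⟩ := hτ; exact hswap i f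
  | one => rfl
  | mul σ τ _ _ hσ hτ => exact (hτ (f ∘ σ)).trans (hσ f)

theorem Fin.init_comp_swap_castSucc {α : Type*} {n : ℕ} (f : Fin (n + 1) → α) (a b : Fin n) :
    Fin.init (f ∘ swap a.castSucc b.castSucc) = Fin.init f ∘ swap a b := by
  funext k
  simp [Fin.init, (Fin.castSucc_injective n).swap_apply]

section

variable {R : Type*} [CommSemiring R] {ι : Type*} {E : ℕ → Type*}
    [∀ q, AddCommMonoid (E q)] [∀ q, Module R (E q)] (θ : ∀ q, ι → (E q →ₗ[R] E (q + 1)))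

theorem iterComp_succ (q : ℕ) (f : Fin (q + 1) → ι) :
    iterComp θ (q + 1) f = (θ q (f (Fin.last q))).comp (iterComp θ q (Fin.init f)) :=
  rfl

variable (hcomm : ∀ (q : ℕ) (i j : ι), (θ (q + 1) i).comp (θ q j) = (θ (q + 1) j).comp (θ q i))
include hcomm

theorem iterComp_comp_swap_last {q : ℕ} (f : Fin (q + 2) → ι) :
    iterComp θ (q + 2) (f ∘ swap (Fin.last q).castSucc (Fin.last q).succ) =
      iterComp θ (q + 2) f := by
  have hinit : Fin.init (Fin.init (f ∘ swap (Fin.last q).castSucc (Fin.last q).succ)) =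
      Fin.init (Fin.init f) := by
    funext k
    simp [Fin.init, Fin.succ_last, swap_apply_of_ne_of_ne, Fin.castSucc_lt_last, Fin.ne_of_lt]
  rw [iterComp_succ, iterComp_succ θ q, hinit, iterComp_succ, iterComp_succ θ q,
    ← LinearMap.comp_assoc, ← LinearMap.comp_assoc]
  simp [Fin.init, Fin.succ_last, hcomm]

theorem iterComp_comp_swap {q : ℕ} (i : Fin (q + 1)) (f : Fin (q + 2) → ι) :
    iterComp θ (q + 2) (f ∘ swap i.castSucc i.succ) = iterComp θ (q + 2) f := by
  induction q with
  | zero => rw [Fin.fin_one_eq_zero i]; exact iterComp_comp_swap_last θ hcomm f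
  | succ m ih =>
    induction i using Fin.lastCases with
    | last => exact iterComp_comp_swap_last θ hcomm f
    | cast j =>
      have hlast : swap j.castSucc.castSucc j.castSucc.succ (Fin.last (m + 2)) = Fin.last _ :=
        swap_apply_of_ne_of_ne (Fin.castSucc_lt_last _).ne' 
          (by rw [Fin.succ_castSucc]; exact (Fin.castSucc_lt_last _).ne')
      rw [iterComp_succ, iterComp_succ θ (m + 2), Function.comp_apply, hlast,
        ← Fin.castSucc_succ, Fin.init_comp_swap_castSucc, ih]

end

/- With `θ` written in components for a basis (indexed by `ι`) of `Ω`, `θ ∧ θ = 0` says that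
consecutive components commute, and the factorization of `θ^q` through `E ⊗ S^q Ω` says that the
iterated composites are invariant under permutations of the index tuple. -/
theorem stmt_17 {R : Type*} [CommSemiring R] {ι : Type*} {E : ℕ → Type*}
    [∀ q, AddCommMonoid (E q)] [∀ q, Module R (E q)]
    (θ : ∀ q, ι → (E q →ₗ[R] E (q + 1)))
    (hcomm : ∀ (q : ℕ) (i j : ι),
      (θ (q + 1) i).comp (θ q j) = (θ (q + 1) j).comp (θ q i)) :
    ∀ (q : ℕ) (f : Fin q → ι) (σ : Equiv.Perm (Fin q)),
      iterComp θ q (f ∘ σ) = iterComp θ q f := by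
  intro q f σ
  cases q with
  | zero => exact congrArg _ (Subsingleton.elim _ _)
  | succ n =>
    refine Fin.apply_comp_perm_eq_of_apply_comp_swap (iterComp θ (n + 1)) (fun i g => ?_) σ f
    cases n with
    | zero => exact i.elim0
    | succ m => exact iterComp_comp_swap θ hcomm i g
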